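/- Catalan's identity for generalized balancing numbers: for integers n ≥ r ≥ 0, B_{k,n+r}·B_{k,n−r} − B_{k,n}² = −(k−1)^{n−r}·B_{k,r}². -/
import Mathlib


def B (k : ℤ) : ℕ → ℤ
  | 0 => 0
  | 1 => 1
  | (n+2) => 3*k * B k (n+1) + (1-k) * B k n

lemma B_rec (k : ℤ) (n : ℕ) : B k (n+2) = 3*k * B k (n+1) + (1-k) * B k n := rfl

lemma B_add (k : ℤ) (j : ℕ) : ∀ i, B k (i+j+1) = B k (i+1) * B k (j+1) + (1-k) * B k i * B k j := by
  intro i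
  induction i using Nat.strong_induction_on with
  | _ i ih =>
    match i with
    | 0 => simp [B]
    | 1 => rw [show 1+j+1 = j+2 from by omega, B_rec, B_rec k 0]; simp [B]
    | (i+2) =>
      have h1 := ih (i+1) (by omega)
      have h2 := ih i (by omega)
      rw [show i+2+j+1 = (i+j+1)+2 from by omega, B_rec,
        show i+j+1+1 = (i+1)+j+1 from by omega, h1, h2,
        show i+1+1 = i+2 from by omega, show i+2+1 = i+1+2 from by omega, B_rec k (i+1),
        show i+1+1 = i+2 from by omega, B_rec k i]
      ring

lemma B_wron (k : ℤ) (r : ℕ) : ∀ j, B k (j+1+r) * B k j - B k (j+r) * B k (j+1) = -(k-1)^j * B k r := by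
  intro j
  induction j with
  | zero => simp [B]
  | succ j ih =>
    rw [show j+1+1+r = (j+r)+2 from by omega, B_rec, show j+r+1 = j+1+r from by omega,
      show j+1+1 = j+2 from rfl, B_rec]
    linear_combination (k-1) * ih

theorem stmt7 (k : ℤ) (hk : 1 ≤ k) (n r : ℕ) (h : r ≤ n) :
    B k (n+r) * B k (n-r) - (B k n) ^ 2 = -(k-1) ^ (n-r) * (B k r) ^ 2 := by
  obtain ⟨m, rfl⟩ : ∃ m, n = m + r := ⟨n - r, by omega⟩
  simp only [Nat.add_sub_cancel]
  match m with
  | 0 => simp [B]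
  | (a+1) =>
    have h1 := B_add k r (a+r)
    have h2 := B_add k r a
    have h3 := B_wron k r a
    rw [show a+r+r+1 = a+1+r+r from by omega, show a+r+1 = a+1+r from by omega] at h1
    rw [show a+r+1 = a+1+r from by omega] at h2
    linear_combination B k (a+1) * h1 - B k (a+1+r) * h2 - (1-k) * B k r * h3
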